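/- arXiv:math/9803169 — 5 statements merged into one kernel-verified Lean document; each statement's English description precedes it below -/
import Mathlib

section
/- Let k be a field, V a finite-dimensional k-vector space, and let R, S ⊆ End_k(V) be k-subalgebras of the endomorphism algebra of V. Assume: (i) R is a semisimple k-algebra; (ii) V is a free R-module; (iii) V is a semisimple S-module; (iv) R is the commutant (centralizer) of S in End_k(V), i.e. R = End_S(V); (v) there is a nonzero k-subspace U ⊆ V with RU ⊆ U and SU ⊆ U; (vi) the image of the natural ring homomorphism S → End_k(U) given by restriction is commutative. Then dim_k R = dim_k V, and there exists a ring homomorphism from R to an algebraic closure of k. -/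
/-!
By the double centralizer theorem for the semisimple `S`-module `V`, `S = End_R(V)`. If `V ≅ Rⁿ`,
the matrix units give `E i j ∘ E j i` and `E j i ∘ E i j` in `S`, the projections onto the `i`th
and `j`th coordinates; they agree on `u` only if both coordinates of `u` vanish, so a nonzero
`u ∈ U` forces `n = 1`, i.e. `V ≅ R` and `dim R = dim V`. Right multiplications then embed `Rᵐᵒᵖ`
into `S`; restricted to `U` they commute, hence generate a nonzero commutative finite-dimensional
`k`-algebra, one of whose residue fields embeds into `k̄`. Since `k̄` is commutative, the resulting
map on `Rᵐᵒᵖ` is a ring hom on `R`.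
-/

open Module

theorem Module.End.restrictScalars_mem_centralizer {k V : Type*} [CommSemiring k]
    [AddCommMonoid V] [Module k V] (R : Subalgebra k (End k V)) (f : End R V) :
    f.restrictScalars k ∈ Subalgebra.centralizer k (R : Set (End k V)) :=
  (Subalgebra.mem_centralizer_iff k).2 fun r hr ↦
    LinearMap.ext fun v ↦ (f.map_smul ⟨r, hr⟩ v).symm

theorem Subalgebra.centralizer_centralizer_of_isSemisimpleModule {k V : Type*} [CommRing k]
    [AddCommGroup V] [Module k V] [Module.Finite k V] (S : Subalgebra k (End k V))
    [IsSemisimpleModule S V] :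
    centralizer k (centralizer k (S : Set (End k V)) : Set (End k V)) = S := by
  refine le_antisymm (fun f hf ↦ ?_) (le_centralizer_centralizer k)
  have : Module.Finite (End S V) V := .of_restrictScalars_finite k _ _
  let F : End (End S V) V :=
    { toFun := f
      map_add' := f.map_add
      map_smul' g v := congr($((mem_centralizer_iff k).1 hf _
        (End.restrictScalars_mem_centralizer S g)) v).symm }
  obtain ⟨s, hs⟩ := Module.Finite.toModuleEnd_moduleEnd_surjective F
  convert s.2
  exact LinearMap.ext fun v ↦ congr($hs v).symm

section Basis

variable {R M ι : Type*} [Ring R] [AddCommGroup M] [Module R M]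

theorem Module.Basis.repr_eq_zero_of_forall_commute (b : Basis ι R M) {u : M}
    (hu : ∀ f g : End R M, f (g u) = g (f u)) {i j : ι} (hij : i ≠ j) : b.repr u j = 0 := by
  let E (i j : ι) : End R M :=
    b.repr.symm.toLinearMap ∘ₗ Finsupp.lsingle i ∘ₗ Finsupp.lapply j ∘ₗ b.repr.toLinearMap
  have := congr(b.repr $(hu (E i j) (E j i)) j)
  simpa [E, Finsupp.single_apply, hij] using this.symm

theorem Module.Basis.subsingleton_of_forall_commute (b : Basis ι R M) {u : M} (hu₀ : u ≠ 0)
    (hu : ∀ f g : End R M, f (g u) = g (f u)) : Subsingleton ι := by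
  by_contra! hι
  refine hu₀ (b.ext_elem fun j ↦ ?_)
  obtain ⟨i, hij⟩ := exists_ne j
  simpa using b.repr_eq_zero_of_forall_commute hu hij

end Basis

def Module.End.restrictScalarsRingHom (k : Type*) {R V : Type*} [CommSemiring k] [Semiring R]
    [AddCommMonoid V] [Module k V] [Module R V] [LinearMap.CompatibleSMul V V k R] :
    End R V →+* End k V where
  toFun f := f.restrictScalars k
  map_one' := rfl
  map_mul' _ _ := rfl
  map_zero' := rfl
  map_add' _ _ := rfl

def RingHom.endRestrict {k A V : Type*} [CommSemiring k] [Semiring A] [AddCommMonoid V]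
    [Module k V] (φ : A →+* End k V) (U : Submodule k V) (hU : ∀ a, ∀ u ∈ U, φ a u ∈ U) :
    A →+* End k U where
  toFun a := (φ a).restrict (hU a)
  map_one' := by ext; simp
  map_mul' _ _ := by ext; simp
  map_zero' := by ext; simp
  map_add' _ _ := by ext; simp

open scoped IsMulCommutative in
theorem nonempty_ringHom_algebraicClosure_of_commute {k A B : Type*} [Field k] [Ring A] [Ring B]
    [Algebra k B] [FiniteDimensional k B] [Nontrivial B] (φ : A →+* B)
    (hφ : ∀ x y, Commute (φ x) (φ y)) : Nonempty (A →+* AlgebraicClosure k) := by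
  let C := Algebra.adjoin k (Set.range φ)
  have : IsMulCommutative C := Algebra.isMulCommutative_adjoin k <| by
    rintro _ ⟨x, rfl⟩ _ ⟨y, rfl⟩
    exact hφ x y
  obtain ⟨m, hm⟩ := Ideal.exists_maximal C
  let : Field (C ⧸ m) := Ideal.Quotient.field m
  have : FiniteDimensional k (C ⧸ m) :=
    .of_surjective (Ideal.Quotient.mkₐ k m).toLinearMap (Ideal.Quotient.mkₐ_surjective k m)
  have : Module.IsTorsionFree k (C ⧸ m) := DivisionSemiring.to_moduleIsTorsionFree
  let χ : C ⧸ m →ₐ[k] AlgebraicClosure k := IsAlgClosed.lift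
  exact ⟨χ.toRingHom.comp <| (Ideal.Quotient.mk m).comp <|
    φ.codRestrict C fun x ↦ Algebra.subset_adjoin ⟨x, rfl⟩⟩

theorem dim_eq_and_ringHom_to_algClosure_of_commutative_on_invariant_subspace_general
    (k : Type*) [Field k] (V : Type*) [AddCommGroup V] [Module k V]
    [FiniteDimensional k V]
    (R S : Subalgebra k (Module.End k V))
    (hfree : Module.Free R V)
    (hV : IsSemisimpleModule S V)
    (hcent : R = Subalgebra.centralizer k (S : Set (Module.End k V)))
    (U : Submodule k V) (hU : U ≠ ⊥)
    (hSU : ∀ s ∈ S, ∀ u ∈ U, s u ∈ U)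
    (hScommU : ∀ s ∈ S, ∀ s' ∈ S, ∀ u ∈ U, s (s' u) = s' (s u)) :
    Module.finrank k R = Module.finrank k V ∧
      Nonempty (R →+* AlgebraicClosure k) := by
  have hRS : Subalgebra.centralizer k (R : Set (End k V)) = S := by
    rw [hcent, Subalgebra.centralizer_centralizer_of_isSemisimpleModule]
  have hEndS (f : End R V) : f.restrictScalars k ∈ S :=
    hRS ▸ End.restrictScalars_mem_centralizer R f
  obtain ⟨u₀, hu₀U, hu₀⟩ := Submodule.exists_mem_ne_zero_of_ne_bot hU
  have : Nontrivial V := ⟨u₀, 0, hu₀⟩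
  let b := Module.Free.chooseBasis R V
  have : Subsingleton _ := b.subsingleton_of_forall_commute hu₀ fun f g ↦
    hScommU _ (hEndS f) _ (hEndS g) u₀ hu₀U
  obtain ⟨i₀⟩ := b.index_nonempty
  let e : V ≃ₗ[R] R := b.repr.trans (Finsupp.uniqueLinearEquiv R R i₀)
  refine ⟨(e.restrictScalars k).finrank_eq.symm, ?_⟩
  -- right multiplication by `a`, transported to `V` along `e`
  let ρ : Rᵐᵒᵖ →+* End k V := (End.restrictScalarsRingHom k).comp <|
    e.symm.conjRingEquiv.toRingHom.comp (RingEquiv.moduleEndSelf R).toRingHom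
  have hρS (a : Rᵐᵒᵖ) : ρ a ∈ S := hEndS _
  have : Nontrivial U := Submodule.nontrivial_iff_ne_bot.mpr hU
  obtain ⟨χ⟩ := nonempty_ringHom_algebraicClosure_of_commute (k := k)
    (ρ.endRestrict U fun a u hu ↦ hSU _ (hρS a) u hu)
    fun a a' ↦ LinearMap.ext fun u ↦ Subtype.ext <| hScommU _ (hρS a) _ (hρS a') u u.2
  exact ⟨RingHom.unop ((RingEquiv.toOpposite _).toRingHom.comp χ)⟩

/-- **Lemma 1 of Ruppert, "Torsion points of abelian varieties in abelian
extensions".** Let `V` be a finite-dimensional vector space over a field `k`, and let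
`R, S ⊆ End_k(V)` be `k`-subalgebras such that `R` is semisimple, `V` is a free
`R`-module, `V` is a semisimple `S`-module, `R` is the commutant of `S` in `End_k(V)`,
and there is a nonzero subspace `U ⊆ V` that is `R`- and `S`-invariant on which the
induced action of `S` is commutative. Then `dim_k R = dim_k V` and there is a ring
homomorphism `R → k̄` into the algebraic closure of `k`. -/
theorem dim_eq_and_ringHom_to_algClosure_of_commutative_on_invariant_subspace
    (k : Type*) [Field k] (V : Type*) [AddCommGroup V] [Module k V]
    [FiniteDimensional k V]
    (R S : Subalgebra k (Module.End k V))
    (hss : IsSemisimpleRing R)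
    (hfree : Module.Free R V)
    (hV : IsSemisimpleModule S V)
    (hcent : R = Subalgebra.centralizer k (S : Set (Module.End k V)))
    (U : Submodule k V) (hU : U ≠ ⊥)
    (hRU : ∀ r ∈ R, ∀ u ∈ U, r u ∈ U)
    (hSU : ∀ s ∈ S, ∀ u ∈ U, s u ∈ U)
    (hScommU : ∀ s ∈ S, ∀ s' ∈ S, ∀ u ∈ U, s (s' u) = s' (s u)) :
    Module.finrank k R = Module.finrank k V ∧
      Nonempty (R →+* AlgebraicClosure k) :=
  dim_eq_and_ringHom_to_algClosure_of_commutative_on_invariant_subspace_general k V R S hfree hV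
    hcent U hU hSU hScommU
end

section
/- Let k be a field, V a finite-dimensional k-vector space, and let R, S ⊆ End_k(V) be k-subalgebras. Assume: (i) R is a simple k-algebra; (ii) V is a free R-module; (iii) V is a semisimple S-module; (iv) R = End_S(V) is the commutant of S in End_k(V); (v) there is a nonzero k-subspace U ⊆ V with RU ⊆ U and SU ⊆ U; (vi) the image of the restriction homomorphism S → End_k(U) is commutative. Then U = V, S = R, R is commutative (hence a field, finite over k), and dim_k R = dim_k V. -/
set_option synthInstance.maxHeartbeats 1000000 in
set_option maxHeartbeats 4000000 in
/-- **The simple-algebra case in the proof of Lemma 1 of Ruppert, "Torsion points of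
abelian varieties in abelian extensions".** Let `V` be a finite-dimensional vector
space over a field `k`, and let `R, S ⊆ End_k(V)` be `k`-subalgebras such that `R` is a
simple `k`-algebra, `V` is a free `R`-module, `V` is a semisimple `S`-module, `R` is
the commutant of `S` in `End_k(V)`, and there is a nonzero subspace `U ⊆ V` that is
`R`- and `S`-invariant on which the induced action of `S` is commutative. Then `U = V`,
`S = R`, `R` is commutative (hence a field, finite over `k`), and
`dim_k R = dim_k V`. -/
theorem invariant_subspace_eq_top_of_simple_commutant
    (k : Type*) [Field k] (V : Type*) [AddCommGroup V] [Module k V]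
    [FiniteDimensional k V]
    (R S : Subalgebra k (Module.End k V))
    (hsimple : IsSimpleRing R)
    (hfree : Module.Free R V)
    (hV : IsSemisimpleModule S V)
    (hcent : R = Subalgebra.centralizer k (S : Set (Module.End k V)))
    (U : Submodule k V) (hU : U ≠ ⊥)
    (hRU : ∀ r ∈ R, ∀ u ∈ U, r u ∈ U)
    (hSU : ∀ s ∈ S, ∀ u ∈ U, s u ∈ U)
    (hScommU : ∀ s ∈ S, ∀ s' ∈ S, ∀ u ∈ U, s (s' u) = s' (s u)) :
    U = ⊤ ∧ S = R ∧ (∀ x y : R, x * y = y * x) ∧ IsField R ∧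
      Module.Finite k R ∧ Module.finrank k R = Module.finrank k V := by
  haveI := hsimple
  haveI := hfree
  haveI := hV
  obtain ⟨u₀, hu₀U, hu₀⟩ := Submodule.ne_bot_iff U |>.mp hU
  haveI : Nontrivial V := nontrivial_of_ne u₀ 0 hu₀
  -- membership in R via centralizing S
  have memR : ∀ x : Module.End k V, (∀ g ∈ S, g * x = x * g) → x ∈ R := by
    intro x hx
    rw [hcent, Subalgebra.mem_centralizer_iff]
    exact hx
  have memR' : ∀ x : Module.End k V, x ∈ R → ∀ g ∈ S, g * x = x * g := by
    intro x hx
    rw [hcent, Subalgebra.mem_centralizer_iff] at hx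
    exact hx
  -- any S-linear endomorphism lies in R
  have SlinR : ∀ f : V →ₗ[S] V, (LinearMap.restrictScalars k f : Module.End k V) ∈ R := by
    intro f
    refine memR _ fun g hg => ?_
    ext v
    exact (f.map_smul (⟨g, hg⟩ : S) v).symm
  -- Step 1 : U = ⊤
  have hUtop : U = ⊤ := by
    let US : Submodule S V :=
      { carrier := (U : Set V)
        add_mem' := fun ha hb => U.add_mem ha hb
        zero_mem' := U.zero_mem
        smul_mem' := fun c {x} hx => hSU (c : Module.End k V) c.2 x hx }
    obtain ⟨W, hW⟩ := exists_isCompl US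
    let eS : V →ₗ[S] V := US.subtype ∘ₗ (US.linearProjOfIsCompl W hW)
    let e : Module.End k V := LinearMap.restrictScalars k eS
    have heR : e ∈ R := SlinR eS
    have heU : ∀ v : V, e v ∈ U := fun v => ((US.linearProjOfIsCompl W hW) v).2
    have heu₀ : e u₀ = u₀ := by
      have : (US.linearProjOfIsCompl W hW) u₀ = ⟨u₀, hu₀U⟩ :=
        Submodule.linearProjOfIsCompl_apply_left hW ⟨u₀, hu₀U⟩
      simpa [e, eS] using congrArg (Subtype.val) this
    have hene : (⟨e, heR⟩ : R) ≠ 0 := by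
      intro h
      apply hu₀
      have : e = 0 := congrArg Subtype.val h
      rw [← heu₀, this]
      rfl
    let I : TwoSidedIdeal R := TwoSidedIdeal.mk' {r : R | ∀ v : V, (r : Module.End k V) v ∈ U}
      (fun v => by simp [U.zero_mem])
      (fun {x y} hx hy v => by
        have : ((x + y : R) : Module.End k V) v = (x : Module.End k V) v
            + (y : Module.End k V) v := rfl
        rw [this]; exact U.add_mem (hx v) (hy v))
      (fun {x} hx v => by
        have : ((-x : R) : Module.End k V) v = -((x : Module.End k V) v) := rfl
        rw [this]; exact U.neg_mem (hx v))
      (fun {x y} hy v => by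
        have : ((x * y : R) : Module.End k V) v
            = (x : Module.End k V) ((y : Module.End k V) v) := rfl
        rw [this]; exact hRU _ x.2 _ (hy v))
      (fun {x y} hx v => by
        have : ((x * y : R) : Module.End k V) v
            = (x : Module.End k V) ((y : Module.End k V) v) := rfl
        rw [this]; exact hx _)
    have hone : (1 : R) ∈ I :=
      IsSimpleRing.one_mem_of_ne_zero_mem I hene
        ((TwoSidedIdeal.mem_mk' _ _ _ _ _ _ _).mpr heU)
    rw [TwoSidedIdeal.mem_mk'] at hone
    rw [eq_top_iff]
    intro v _
    simpa using hone v
  -- Step 2 : S ≤ R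
  have hSR : S ≤ R := by
    intro s hs
    refine memR _ fun g hg => ?_
    ext v
    exact hScommU g hg s hs v (hUtop ▸ Submodule.mem_top)
  -- Step 3 : the basis of V over R has a single element
  let b := Module.Free.chooseBasis R V
  haveI : Nonempty (Module.Free.ChooseBasisIndex R V) := b.index_nonempty
  -- any R-linear endomorphism lies in R and centralizes R
  have key : ∀ f : V →ₗ[R] V, (LinearMap.restrictScalars k f : Module.End k V) ∈ R ∧
      ∀ r : Module.End k V, r ∈ R →
        r * (LinearMap.restrictScalars k f) = (LinearMap.restrictScalars k f) * r := by
    intro f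
    have hcomm : ∀ r : Module.End k V, r ∈ R →
        r * (LinearMap.restrictScalars k f) = (LinearMap.restrictScalars k f) * r := by
      intro r hr
      ext v
      exact (f.map_smul (⟨r, hr⟩ : R) v).symm
    exact ⟨memR _ fun g hg => hcomm g (hSR hg), hcomm⟩
  haveI : Subsingleton (Module.Free.ChooseBasisIndex R V) := by
    by_contra hns
    rw [not_subsingleton_iff_nontrivial] at hns
    obtain ⟨i, j, hij⟩ := exists_pair_ne (Module.Free.ChooseBasisIndex R V)
    let g : V →ₗ[R] V := b.constr ℕ (fun l => if l = i then b j else 0)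
    let h : V →ₗ[R] V := b.constr ℕ (fun l => if l = j then b i else 0)
    have hg_j : g (b j) = 0 := by
      have := b.constr_basis ℕ (fun l => if l = i then b j else 0) j
      simpa [g, Ne.symm hij] using this
    have hh_j : h (b j) = b i := by
      have := b.constr_basis ℕ (fun l => if l = j then b i else 0) j
      simpa [h] using this
    have hg_i : g (b i) = b j := by
      have := b.constr_basis ℕ (fun l => if l = i then b j else 0) i
      simpa [g] using this
    have hgh := (key h).2 _ (key g).1
    have hev : g (h (b j)) = h (g (b j)) := by
      have := congrArg (fun f : Module.End k V => f (b j)) hgh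
      simpa using this
    rw [hh_j, hg_i, hg_j, map_zero] at hev
    exact b.ne_zero j hev
  obtain ⟨i₀⟩ := ‹Nonempty (Module.Free.ChooseBasisIndex R V)›
  haveI : Unique (Module.Free.ChooseBasisIndex R V) := uniqueOfSubsingleton i₀
  set v₀ : V := b i₀ with hv₀
  -- injectivity of evaluation at v₀ on R
  have inj : ∀ x y : R, (x : Module.End k V) v₀ = (y : Module.End k V) v₀ → x = y := by
    intro x y hxy
    have hx : ∀ z : R, b.repr ((z : Module.End k V) v₀) i₀ = z := by
      intro z
      have h1 : (z : Module.End k V) v₀ = z • (b i₀) := rfl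
      rw [h1, map_smul, b.repr_self]
      simp
    have := hx x
    rw [hxy, hx y] at this
    exact this.symm
  -- every vector is a multiple of v₀
  have hspan : ∀ v : V, ∃ c : R, (c : Module.End k V) v₀ = v := by
    intro v
    have hv : v ∈ Submodule.span R (Set.range b) := by
      rw [b.span_eq]; trivial
    rw [Set.range_unique] at hv
    obtain ⟨c, hc⟩ := Submodule.mem_span_singleton.mp hv
    exact ⟨c, by rw [hv₀, Subsingleton.elim i₀ default]; exact hc⟩
  -- Step 4 : R is commutative
  have hRcomm : ∀ x y : Module.End k V, x ∈ R → y ∈ R → x * y = y * x := by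
    intro x y hx hy
    let gx : V →ₗ[R] V := b.constr ℕ (fun _ => x v₀)
    have hgx : (LinearMap.restrictScalars k gx : Module.End k V) v₀ = x v₀ := by
      rw [hv₀]
      exact b.constr_basis ℕ (fun _ => x v₀) i₀
    have hxeq : (⟨_, (key gx).1⟩ : R) = ⟨x, hx⟩ := inj _ _ hgx
    have := (key gx).2 y hy
    rw [show (LinearMap.restrictScalars k gx : Module.End k V) = x from
      congrArg Subtype.val hxeq] at this
    exact this.symm
  -- Step 5 : R ≤ S, hence S = R
  have hRS : R ≤ S := by
    have hv₀mem : v₀ ∈ Submodule.span S {v₀} := Submodule.mem_span_singleton_self v₀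
    obtain ⟨W, hW⟩ := exists_isCompl (Submodule.span S {v₀})
    let eS : V →ₗ[S] V := (Submodule.span S {v₀}).subtype ∘ₗ
      ((Submodule.span S {v₀}).linearProjOfIsCompl W hW)
    have heR : (LinearMap.restrictScalars k eS : Module.End k V) ∈ R := SlinR eS
    have hev₀ : (LinearMap.restrictScalars k eS : Module.End k V) v₀ = v₀ := by
      have : ((Submodule.span S {v₀}).linearProjOfIsCompl W hW) v₀ = ⟨v₀, hv₀mem⟩ :=
        Submodule.linearProjOfIsCompl_apply_left hW ⟨v₀, hv₀mem⟩
      simpa [eS] using congrArg Subtype.val this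
    have he1 : (⟨_, heR⟩ : R) = 1 := inj _ _ (by simpa using hev₀)
    have hetop : ∀ v : V, v ∈ Submodule.span S {v₀} := by
      intro v
      have h1 : (LinearMap.restrictScalars k eS : Module.End k V) v = v := by
        rw [show (LinearMap.restrictScalars k eS : Module.End k V) = 1 from
          congrArg Subtype.val he1]
        rfl
      rw [← h1]
      exact ((Submodule.span S {v₀}).linearProjOfIsCompl W hW v).2
    intro r hr
    obtain ⟨s, hs⟩ := Submodule.mem_span_singleton.mp (hetop (r v₀))
    have h1 : (⟨(s : Module.End k V), hSR s.2⟩ : R) = ⟨r, hr⟩ := inj _ _ hs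
    have h2 : (s : Module.End k V) = r := congrArg Subtype.val h1
    rw [← h2]
    exact s.2
  have hSeqR : S = R := le_antisymm hSR hRS
  have hmulcomm : ∀ x y : R, x * y = y * x := by
    intro x y
    apply Subtype.ext
    rw [MulMemClass.coe_mul, MulMemClass.coe_mul]
    exact hRcomm _ _ x.2 y.2
  -- R is a field
  have hfield : IsField R := by
    refine ⟨exists_pair_ne R, fun {x y} => hmulcomm x y, ?_⟩
    intro a ha
    let J : TwoSidedIdeal R := TwoSidedIdeal.mk' {x : R | ∃ y, x = y * a}
      ⟨0, (zero_mul a).symm⟩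
      (fun {x y} ⟨u, hu⟩ ⟨w, hw⟩ => ⟨u + w, by rw [hu, hw, add_mul]⟩)
      (fun {x} ⟨u, hu⟩ => ⟨-u, by rw [hu]; exact (neg_mul u a).symm⟩)
      (fun {x y} ⟨u, hu⟩ => ⟨x * u, by rw [hu, mul_assoc]⟩)
      (fun {x y} ⟨u, hu⟩ => ⟨u * y, by rw [hu, mul_assoc, mul_assoc, hmulcomm a y]⟩)
    have h1 : (1 : R) ∈ J :=
      IsSimpleRing.one_mem_of_ne_zero_mem J ha
        ((TwoSidedIdeal.mem_mk' _ _ _ _ _ _ _).mpr ⟨1, (one_mul a).symm⟩)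
    rw [TwoSidedIdeal.mem_mk'] at h1
    obtain ⟨y, hy⟩ := h1
    exact ⟨y, by rw [hmulcomm a y, ← hy]⟩
  -- finiteness and rank
  haveI hfin : Module.Finite k R := by
    have : Module.Finite k (Module.End k V) := inferInstance
    exact Module.Finite.of_injective (Subalgebra.toSubmodule R).subtype Subtype.val_injective
  have hrank : Module.finrank k R = Module.finrank k V := by
    let ψ : R →ₗ[k] V :=
      { toFun := fun x => (x : Module.End k V) v₀
        map_add' := fun x y => rfl
        map_smul' := fun c x => rfl }
    have hbij : Function.Bijective ψ := by
      constructor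
      · intro x y hxy
        exact inj x y hxy
      · intro v
        obtain ⟨c, hc⟩ := hspan v
        exact ⟨c, hc⟩
    exact (LinearEquiv.ofBijective ψ hbij).finrank_eq
  exact ⟨hUtop, hSeqR, hmulcomm, hfield, hfin, hrank⟩
end

section
/- Let D be a noncommutative division ring which is finite-dimensional as a ℚ-vector space, and let p be any prime number. Then there is no ring homomorphism from D ⊗_ℚ ℚ_p to any field k. -/
open scoped TensorProduct

/-- **Lemma 3(1) of Ruppert, "Torsion points of abelian varieties in abelian
extensions".** If `D` is a noncommutative division ring, finite-dimensional over `ℚ`,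
and `p` is any prime, then there is no (unital) ring homomorphism from
`D ⊗[ℚ] ℚ_p` to any (commutative) field `k`. -/
theorem no_ringHom_tensor_padic_to_field
    (D : Type*) [DivisionRing D] [Algebra ℚ D] [FiniteDimensional ℚ D]
    (hnc : ∃ x y : D, x * y ≠ y * x)
    (p : ℕ) [Fact p.Prime]
    (k : Type*) [Field k] :
    IsEmpty ((D ⊗[ℚ] ℚ_[p]) →+* k) := by
  constructor
  intro f
  obtain ⟨x, y, hxy⟩ := hnc
  set g := f.comp (Algebra.TensorProduct.includeLeftRingHom (R := ℚ) (A := D) (B := ℚ_[p]))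
  exact hxy (g.injective (by simp only [map_mul]; exact mul_comm _ _))
end

section
/- Let D be a noncommutative division ring which is finite-dimensional as a ℚ-vector space, and let 𝒪 be an order in D, i.e. a subring of D which is finitely generated as a ℤ-module and satisfies 𝒪 ⊗_ℤ ℚ = D (𝒪 spans D over ℚ). Then for all sufficiently large prime numbers p, there is no ring homomorphism from 𝒪 ⊗_ℤ ℤ/(p) to any field k. -/
open scoped TensorProduct

universe u

/-- **Lemma 3(2) of Ruppert, "Torsion points of abelian varieties in abelian
extensions".** If `D` is a noncommutative division ring, finite-dimensional over `ℚ`,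
and `𝒪` is an order in `D` (a subring which is finitely generated as a `ℤ`-module and
spans `D` over `ℚ`), then for all sufficiently large primes `p` there is no (unital)
ring homomorphism from `𝒪 ⊗[ℤ] ℤ/(p)` to any (commutative) field `k`. -/
theorem no_ringHom_order_mod_p_to_field
    (D : Type*) [DivisionRing D] [Algebra ℚ D] [FiniteDimensional ℚ D]
    (hnc : ∃ x y : D, x * y ≠ y * x)
    (𝒪 : Subring D) (hfg : Module.Finite ℤ 𝒪)
    (hspan : Submodule.span ℚ (𝒪 : Set D) = ⊤) :
    ∃ N : ℕ, ∀ p : ℕ, p.Prime → N < p →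
      ∀ (k : Type u) [Field k], IsEmpty ((𝒪 ⊗[ℤ] ZMod p) →+* k) := by
  classical
  -- Step 1: find noncommuting elements inside 𝒪
  have h1 : ∃ a b : D, a ∈ 𝒪 ∧ b ∈ 𝒪 ∧ a * b ≠ b * a := by
    by_contra h
    push_neg at h
    obtain ⟨x, y, hxy⟩ := hnc
    apply hxy
    have key : ∀ z ∈ Submodule.span ℚ (𝒪 : Set D), ∀ a ∈ 𝒪, Commute a z := by
      intro z hz
      induction hz using Submodule.span_induction with
      | mem u hu => exact fun a ha => h a u ha hu
      | zero => exact fun a _ => Commute.zero_right a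
      | add u v _ _ ihu ihv => exact fun a ha => (ihu a ha).add_right (ihv a ha)
      | smul q u _ ih => exact fun a ha => (ih a ha).smul_right q
    have key2 : ∀ z ∈ Submodule.span ℚ (𝒪 : Set D), Commute x z := by
      intro z hz
      induction hz using Submodule.span_induction with
      | mem u hu => exact (key x (hspan ▸ Submodule.mem_top) u hu).symm
      | zero => exact Commute.zero_right x
      | add u v _ _ ihu ihv => exact ihu.add_right ihv
      | smul q u _ ih => exact ih.smul_right q
    exact (key2 y (hspan ▸ Submodule.mem_top)).eq
  obtain ⟨a, b, ha, hb, hab⟩ := h1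
  set c : D := a * b - b * a with hc
  have hc0 : c ≠ 0 := sub_ne_zero.mpr hab
  have hcmem : c ∈ 𝒪 := 𝒪.sub_mem (𝒪.mul_mem ha hb) (𝒪.mul_mem hb ha)
  -- Step 2: clear denominators for c⁻¹
  have hden : ∀ x ∈ Submodule.span ℚ (𝒪 : Set D), ∃ n : ℕ, 0 < n ∧ (n : ℤ) • x ∈ 𝒪 := by
    intro x hx
    induction hx using Submodule.span_induction with
    | mem u hu => exact ⟨1, one_pos, by simpa using hu⟩
    | zero => exact ⟨1, one_pos, by simpa using 𝒪.zero_mem⟩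
    | add u v _ _ ihu ihv =>
        obtain ⟨m, hm, hmu⟩ := ihu
        obtain ⟨n, hn, hnv⟩ := ihv
        refine ⟨m * n, Nat.mul_pos hm hn, ?_⟩
        have : ((m * n : ℕ) : ℤ) • (u + v) = (n : ℤ) • ((m : ℤ) • u) + (m : ℤ) • ((n : ℤ) • v) := by
          push_cast
          rw [smul_add, smul_smul, smul_smul]
          ring_nf
        rw [this]
        exact 𝒪.add_mem (zsmul_mem hmu _) (zsmul_mem hnv _)
    | smul q u _ ih =>
        obtain ⟨n, hn, hnu⟩ := ih
        refine ⟨q.den * n, Nat.mul_pos q.pos hn, ?_⟩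
        have hq : q * (q.den : ℚ) = q.num := by
          nth_rewrite 1 [← Rat.num_div_den q]
          rw [div_mul_cancel₀]
          exact_mod_cast q.den_ne_zero
        have key : ((q.den * n : ℕ) : ℤ) • (q • u) = q.num • ((n : ℤ) • u) := by
          rw [← Int.cast_smul_eq_zsmul ℚ ((q.den * n : ℕ) : ℤ) (q • u), smul_smul,
            ← Int.cast_smul_eq_zsmul ℚ ((n : ℤ)) u,
            ← Int.cast_smul_eq_zsmul ℚ q.num, smul_smul]
          congr 1
          push_cast
          linear_combination (n : ℚ) * hq
        rw [key]
        exact zsmul_mem hnu _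
  have hinv : c⁻¹ ∈ Submodule.span ℚ (𝒪 : Set D) := hspan ▸ Submodule.mem_top
  obtain ⟨n, hn, hd⟩ := hden _ hinv
  refine ⟨n, fun p hp hnp k _ => ⟨fun φ => ?_⟩⟩
  set ψ : 𝒪 →+* k := φ.comp Algebra.TensorProduct.includeLeftRingHom with hψ
  have hcd : (⟨c, hcmem⟩ : 𝒪) * ⟨(n : ℤ) • c⁻¹, hd⟩ = (n : 𝒪) := by
    ext
    push_cast
    rw [mul_smul_comm, mul_inv_cancel₀ hc0]
    simp
  have hψc : ψ ⟨c, hcmem⟩ = 0 := by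
    have : (⟨c, hcmem⟩ : 𝒪) = ⟨a, ha⟩ * ⟨b, hb⟩ - ⟨b, hb⟩ * ⟨a, ha⟩ := rfl
    rw [this, map_sub, map_mul, map_mul, mul_comm]
    simp
  have hnk : (n : k) = 0 := by
    have := congrArg ψ hcd
    rw [map_mul, hψc, zero_mul, map_natCast] at this
    exact this.symm
  have hpk : (p : k) = 0 := by
    have h0 : ((p : 𝒪) ⊗ₜ[ℤ] (1 : ZMod p) : 𝒪 ⊗[ℤ] ZMod p) = 0 := by
      rw [show ((p : 𝒪)) = (p : ℤ) • (1 : 𝒪) by simp, TensorProduct.smul_tmul]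
      simp
    calc (p : k) = ψ (p : 𝒪) := (map_natCast ψ p).symm
    _ = φ ((p : 𝒪) ⊗ₜ[ℤ] 1) := rfl
    _ = 0 := by rw [h0, map_zero]
  have hdvd_p : ringChar k ∣ p := (ringChar.spec k p).mp hpk
  have hdvd_n : ringChar k ∣ n := (ringChar.spec k n).mp hnk
  rcases (Nat.Prime.eq_one_or_self_of_dvd hp _ hdvd_p) with h1 | h1
  · have : (1 : k) = 0 := by simpa using (ringChar.spec k 1).mpr (h1 ▸ dvd_refl _)
    exact one_ne_zero this
  · have : p ≤ n := Nat.le_of_dvd hn (h1 ▸ hdvd_n)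
    omega
end

section
/- Let D be a noncommutative division ring which is finite-dimensional as a ℚ-vector space, and let 𝒪 be an order in D, i.e. a subring of D which is finitely generated as a ℤ-module and satisfies 𝒪 ⊗_ℤ ℚ = D. Let 𝔞 ⊆ 𝒪 be the two-sided ideal of 𝒪 generated by all commutators xy − yx with x, y ∈ 𝒪. Then 𝔞 ≠ 0 and 𝔞 has finite index in 𝒪; more precisely, there exists an integer N ≥ 1 with N·𝒪 ⊆ 𝔞. -/
/-! The commutator ideal of an order `𝒪` in a noncommutative division algebra `D` over `ℚ`
contains a nonzero commutator `c`, since `𝒪` spans `D` and so cannot be commutative. As `c` is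
invertible in `D` and `D = ℚ ⊗ 𝒪`, some positive integer multiple `n • c⁻¹` lies in `𝒪`, so
`n = (n • c⁻¹) * c` lies in the ideal. A finitely generated abelian group killed by `n` is finite. -/

open Submodule

theorem exists_mul_ne_mul_of_span_eq_top {R A : Type*} [CommSemiring R] [Semiring A]
    [Algebra R A] {s : Set A} (hs : span R s = ⊤) (h : ∃ x y : A, x * y ≠ y * x) :
    ∃ x ∈ s, ∃ y ∈ s, x * y ≠ y * x := by
  by_contra! hcomm
  obtain ⟨x, y, hxy⟩ := h
  have hle (a : A) : a ∈ s.centralizer.centralizer :=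
    Algebra.adjoin_le_centralizer_centralizer R s
      (Algebra.span_le_adjoin R s (hs ▸ Submodule.mem_top))
  exact hxy (Set.centralizer_centralizer_comm_of_comm hcomm x (hle x) y (hle y))

theorem exists_nsmul_mem_of_mem_span_rat {V : Type*} [AddCommGroup V] [Module ℚ V]
    (M : AddSubgroup V) {v : V} (hv : v ∈ span ℚ (M : Set V)) :
    ∃ n : ℕ, 0 < n ∧ n • v ∈ M := by
  induction hv using span_induction with
  | mem a ha => exact ⟨1, one_pos, by simpa using ha⟩
  | zero => exact ⟨1, one_pos, by simp⟩
  | add a b _ _ ha hb =>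
    obtain ⟨n, hn, hna⟩ := ha
    obtain ⟨m, hm, hmb⟩ := hb
    refine ⟨n * m, Nat.mul_pos hn hm, ?_⟩
    rw [smul_add, mul_comm n m, mul_smul, mul_comm m n, mul_smul]
    exact add_mem (nsmul_mem hna m) (nsmul_mem hmb n)
  | smul q a _ ha =>
    obtain ⟨n, hn, hna⟩ := ha
    refine ⟨q.den * n, Nat.mul_pos q.pos hn, ?_⟩
    have hden : q.den • q • n • a = q.num • n • a := by
      rw [← Nat.cast_smul_eq_nsmul ℚ q.den, smul_smul, mul_comm, Rat.mul_den_eq_num,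
        Int.cast_smul_eq_zsmul]
    rw [mul_smul, smul_comm n q, hden]
    exact zsmul_mem hna q.num

theorem Subring.exists_mul_eq_natCast_of_span_rat_eq_top {D : Type*} [DivisionRing D]
    [Algebra ℚ D] {𝒪 : Subring D} (hspan : span ℚ (𝒪 : Set D) = ⊤) {c : 𝒪} (hc : c ≠ 0) :
    ∃ n : ℕ, 0 < n ∧ ∃ b : 𝒪, b * c = n := by
  obtain ⟨n, hn, hmem⟩ :=
    exists_nsmul_mem_of_mem_span_rat 𝒪.toAddSubgroup (v := (c : D)⁻¹) (hspan ▸ Submodule.mem_top)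
  refine ⟨n, hn, ⟨_, hmem⟩, Subtype.ext ?_⟩
  have hc' : (c : D) ≠ 0 := by exact_mod_cast hc
  simp [mul_assoc, inv_mul_cancel₀ hc']

theorem TwoSidedIdeal.natCast_zsmul_mem {R : Type*} [Ring R] {I : TwoSidedIdeal R} {n : ℕ}
    (h : (n : R) ∈ I) (x : R) : (n : ℤ) • x ∈ I := by
  rw [natCast_zsmul, nsmul_eq_mul]
  exact I.mul_mem_right _ _ h

theorem TwoSidedIdeal.finite_quotient_of_natCast_mem {R : Type*} [Ring R] [Module.Finite ℤ R]
    (I : TwoSidedIdeal R) {n : ℕ} (hn : n ≠ 0) (h : (n : R) ∈ I) : Finite (R ⧸ I.asIdeal) := by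
  let π : R →ₗ[ℤ] R ⧸ I.asIdeal := I.asIdeal.mkQ.toAddMonoidHom.toIntLinearMap
  have hπ : Function.Surjective π := I.asIdeal.mkQ_surjective
  have : Module.Finite ℤ (R ⧸ I.asIdeal) := .of_surjective π hπ
  refine Module.finite_of_fg_torsion _ fun z => ?_
  obtain ⟨x, rfl⟩ := hπ z
  refine ⟨⟨n, mem_nonZeroDivisors_of_ne_zero (by exact_mod_cast hn)⟩, ?_⟩
  exact (map_zsmul π (n : ℤ) x).symm.trans
    ((Quotient.mk_eq_zero _).mpr (natCast_zsmul_mem h x))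

theorem commutator_ideal_of_order_ne_bot_and_finite_index_general
    (D : Type*) [DivisionRing D] [Algebra ℚ D]
    (hnc : ∃ x y : D, x * y ≠ y * x)
    (𝒪 : Subring D) (hfg : Module.Finite ℤ 𝒪)
    (hspan : Submodule.span ℚ (𝒪 : Set D) = ⊤)
    (𝔞 : TwoSidedIdeal 𝒪)
    (h𝔞 : 𝔞 = TwoSidedIdeal.span {z : 𝒪 | ∃ x y : 𝒪, z = x * y - y * x}) :
    𝔞 ≠ ⊥ ∧ Finite (𝒪 ⧸ TwoSidedIdeal.asIdeal 𝔞) ∧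
      ∃ N : ℤ, 1 ≤ N ∧ ∀ x : 𝒪, N • x ∈ 𝔞 := by
  obtain ⟨x, hx, y, hy, hxy⟩ := exists_mul_ne_mul_of_span_eq_top hspan hnc
  set c : 𝒪 := ⟨x, hx⟩ * ⟨y, hy⟩ - ⟨y, hy⟩ * ⟨x, hx⟩
  have hc0 : c ≠ 0 := fun h => hxy (congrArg Subtype.val (sub_eq_zero.mp h))
  have hc : c ∈ 𝔞 := h𝔞 ▸ TwoSidedIdeal.subset_span ⟨_, _, rfl⟩
  obtain ⟨n, hn, b, hbc⟩ := 𝒪.exists_mul_eq_natCast_of_span_rat_eq_top hspan hc0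
  have hn𝔞 : (n : 𝒪) ∈ 𝔞 := hbc ▸ 𝔞.mul_mem_left b c hc
  refine ⟨fun h => hc0 (by simpa [h] using hc), 𝔞.finite_quotient_of_natCast_mem hn.ne' hn𝔞,
    n, by exact_mod_cast hn, TwoSidedIdeal.natCast_zsmul_mem hn𝔞⟩

/-- **Key step in the proof of Lemma 3(2) of Ruppert, "Torsion points of abelian
varieties in abelian extensions".** Let `D` be a noncommutative division ring of finite
dimension over `ℚ` and let `𝒪` be an order in `D`. Then the two-sided ideal `𝔞` of `𝒪`
generated by all commutators `x * y - y * x` is nonzero and of finite index; more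
precisely, there is an integer `N ≥ 1` with `N • 𝒪 ⊆ 𝔞`. -/
theorem commutator_ideal_of_order_ne_bot_and_finite_index
    (D : Type*) [DivisionRing D] [Algebra ℚ D] [FiniteDimensional ℚ D]
    (hnc : ∃ x y : D, x * y ≠ y * x)
    (𝒪 : Subring D) (hfg : Module.Finite ℤ 𝒪)
    (hspan : Submodule.span ℚ (𝒪 : Set D) = ⊤)
    (𝔞 : TwoSidedIdeal 𝒪)
    (h𝔞 : 𝔞 = TwoSidedIdeal.span {z : 𝒪 | ∃ x y : 𝒪, z = x * y - y * x}) :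
    𝔞 ≠ ⊥ ∧ Finite (𝒪 ⧸ TwoSidedIdeal.asIdeal 𝔞) ∧
      ∃ N : ℤ, 1 ≤ N ∧ ∀ x : 𝒪, N • x ∈ 𝔞 :=
  commutator_ideal_of_order_ne_bot_and_finite_index_general D hnc 𝒪 hfg hspan 𝔞 h𝔞
end
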